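/- arXiv:1807.04237 — 2 statements merged into one kernel-verified Lean document; each statement's English description precedes it below -/
import Mathlib

section
/- Under connectedness of the graph and weights uniformly bounded below by a positive constant along the trajectory, every solution of the nonlinear consensus dynamics converges to consensus: lim_{t→∞} x(t) = x̄·𝟙, where x̄ = (1/n)∑ᵢ xᵢ(0) and 𝟙 is the all-ones vector, and the convergence is exponentially fast. -/
/-!
Symmetry of the weights makes the vector field antisymmetric across every edge, so the sum
`∑ᵢ xᵢ` is conserved: the mean of `x(t)` stays at the mean `x̄` of the initial data.
Along the trajectory the disagreement `V = ∑ᵢ (xᵢ - x̄)²` satisfies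
`V' = -∑_{(i,j)} wᵢⱼ (xᵢ - xⱼ)² ≤ -w̲ ∑_{(i,j)} (xᵢ - xⱼ)²`, and a Poincaré inequality on the
connected graph (every difference `xᵢ - xⱼ` is a telescoping sum along a path of at most `n`
edges) bounds the last sum below by `V / n³`. Grönwall then gives `V(t) ≤ V(0) e^{-w̲ t / n³}`.
-/

open Finset Filter Set Real

namespace SimpleGraph

variable {V : Type*} {G : SimpleGraph V}

theorem Walk.abs_sub_le_length_mul (y : V → ℝ) {B : ℝ}
    (hB : ∀ a b, G.Adj a b → |y a - y b| ≤ B) {i j : V} (p : G.Walk i j) :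
    |y i - y j| ≤ p.length * B := by
  induction p with
  | nil => simp
  | @cons u v w hadj p ih =>
    rw [length_cons, Nat.cast_succ, add_one_mul]
    linarith [abs_sub_le (y u) (y v) (y w), hB u v hadj]

variable [Fintype V]

theorem Connected.abs_sub_le_card_mul (hG : G.Connected) (y : V → ℝ) {B : ℝ} (hB₀ : 0 ≤ B)
    (hB : ∀ a b, G.Adj a b → |y a - y b| ≤ B) (i j : V) :
    |y i - y j| ≤ Fintype.card V * B := by
  classical
  obtain ⟨p⟩ := hG.preconnected i j
  calc |y i - y j| ≤ p.toPath.1.length * B := p.toPath.1.abs_sub_le_length_mul y hB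
    _ ≤ Fintype.card V * B := by gcongr; exact p.toPath.2.length_lt.le

variable [DecidableRel G.Adj]

theorem sum_sum_neighborFinset_eq_zero_of_antisymm (f : V → V → ℝ)
    (hf : ∀ i j, f j i = -f i j) :
    ∑ i, ∑ j ∈ G.neighborFinset i, f i j = 0 := by
  have hswap : ∑ i, ∑ j ∈ G.neighborFinset i, f i j =
      ∑ i, ∑ j ∈ G.neighborFinset i, f j i := by
    simp only [neighborFinset_eq_filter, sum_filter]
    rw [sum_comm]
    simp only [G.adj_comm]
  have hneg : ∑ i, ∑ j ∈ G.neighborFinset i, f j i =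
      -∑ i, ∑ j ∈ G.neighborFinset i, f i j := by
    simp only [← sum_neg_distrib, ← hf]
  linarith

theorem sq_sub_le_sum_sum_neighborFinset (y : V → ℝ) {a b : V} (hab : G.Adj a b) :
    (y a - y b) ^ 2 ≤ ∑ i, ∑ j ∈ G.neighborFinset i, (y i - y j) ^ 2 :=
  calc (y a - y b) ^ 2 ≤ ∑ j ∈ G.neighborFinset a, (y a - y j) ^ 2 :=
        single_le_sum (f := fun j => (y a - y j) ^ 2) (fun _ _ => sq_nonneg _)
          ((G.mem_neighborFinset a b).mpr hab)
    _ ≤ ∑ i, ∑ j ∈ G.neighborFinset i, (y i - y j) ^ 2 :=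
        single_le_sum (f := fun i => ∑ j ∈ G.neighborFinset i, (y i - y j) ^ 2)
          (fun _ _ => sum_nonneg fun _ _ => sq_nonneg _) (mem_univ a)

end SimpleGraph

theorem abs_le_of_sum_eq_zero {ι : Type*} [Fintype ι] [Nonempty ι] {y : ι → ℝ}
    (hy : ∑ j, y j = 0) {B : ℝ} (i : ι) (hB : ∀ j, |y i - y j| ≤ B) : |y i| ≤ B := by
  have hcard : (0 : ℝ) < Fintype.card ι := by exact_mod_cast Fintype.card_pos
  have hmul : Fintype.card ι * y i = ∑ j, (y i - y j) := by
    simp [sum_sub_distrib, hy]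
  have hsum : |∑ j, (y i - y j)| ≤ Fintype.card ι * B :=
    (abs_sum_le_sum_abs _ _).trans ((sum_le_sum fun j _ => hB j).trans_eq (by simp))
  rw [← hmul, abs_mul, abs_of_pos hcard] at hsum
  exact le_of_mul_le_mul_left hsum hcard

theorem SimpleGraph.Connected.sum_sq_le_of_sum_eq_zero {V : Type*} [Fintype V]
    {G : SimpleGraph V} [DecidableRel G.Adj] (hG : G.Connected) {y : V → ℝ}
    (hy : ∑ i, y i = 0) :
    ∑ i, y i ^ 2 ≤
      Fintype.card V ^ 3 * ∑ i, ∑ j ∈ G.neighborFinset i, (y i - y j) ^ 2 := by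
  set E := ∑ i, ∑ j ∈ G.neighborFinset i, (y i - y j) ^ 2
  have hE : 0 ≤ E := sum_nonneg fun _ _ => sum_nonneg fun _ _ => sq_nonneg _
  have hedge : ∀ a b, G.Adj a b → |y a - y b| ≤ √E := fun a b hab =>
    abs_le_sqrt (G.sq_sub_le_sum_sum_neighborFinset y hab)
  have := hG.nonempty
  have hpoint : ∀ i, y i ^ 2 ≤ Fintype.card V ^ 2 * E := by
    intro i
    have hyi := abs_le_of_sum_eq_zero hy i fun j =>
      hG.abs_sub_le_card_mul y (sqrt_nonneg E) hedge i j
    calc y i ^ 2 = |y i| ^ 2 := (sq_abs _).symm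
      _ ≤ (Fintype.card V * √E) ^ 2 := by gcongr
      _ = Fintype.card V ^ 2 * E := by rw [mul_pow, sq_sqrt hE]
  calc ∑ i, y i ^ 2 ≤ ∑ _i : V, (Fintype.card V : ℝ) ^ 2 * E :=
        sum_le_sum fun i _ => hpoint i
    _ = Fintype.card V ^ 3 * E := by rw [sum_const, card_univ, nsmul_eq_mul]; ring

theorem le_mul_exp_of_hasDerivWithinAt_le {f f' : ℝ → ℝ} {K a : ℝ}
    (hf : ∀ t, a ≤ t → HasDerivWithinAt f (f' t) (Ici a) t)
    (hbound : ∀ t, a ≤ t → f' t ≤ K * f t) {t : ℝ} (ht : a ≤ t) :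
    f t ≤ f a * exp (K * (t - a)) := by
  have h := le_gronwallBound_of_liminf_deriv_right_le (f' := f') (δ := f a) (ε := 0) (b := t)
    (fun s hs => (hf s hs.1).continuousWithinAt.mono Icc_subset_Ici_self)
    (fun s hs r hr => ((hf s hs.1).mono (Ici_subset_Ici.mpr hs.1)).liminf_right_slope_le hr)
    le_rfl (fun s hs => by simpa using hbound s hs.1) t ⟨ht, le_rfl⟩
  rwa [gronwallBound_ε0] at h

theorem tendsto_of_abs_sub_le_mul_exp {f : ℝ → ℝ} {a C β : ℝ} (hβ : 0 < β)
    (h : ∀ t, 0 ≤ t → |f t - a| ≤ C * exp (-β * t)) : Tendsto f atTop (nhds a) := by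
  have hlim : Tendsto (fun t => C * exp (-β * t)) atTop (nhds 0) := by
    simpa using ((tendsto_exp_atBot.comp
      (tendsto_id.const_mul_atTop_of_neg (neg_neg_of_pos hβ))).const_mul C)
  exact tendsto_sub_nhds_zero_iff.mp
    (squeeze_zero_norm' ((eventually_ge_atTop 0).mono fun t ht => h t ht) hlim)

section Consensus

variable {V : Type*} [Fintype V] (G : SimpleGraph V) [DecidableRel G.Adj]
  (w : V → V → (V → ℝ) → ℝ)

def consensusField (y : V → ℝ) (i : V) : ℝ :=
  ∑ j ∈ G.neighborFinset i, w i j y * (y j - y i)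

def IsConsensusSolution (x : ℝ → V → ℝ) : Prop :=
  ∀ t : ℝ, 0 ≤ t → ∀ i,
    HasDerivWithinAt (fun s => x s i) (consensusField G w (x t) i) (Ici 0) t

variable {G w}

theorem sum_consensusField_eq_zero {y : V → ℝ} (hw : ∀ i j, w i j y = w j i y) :
    ∑ i, consensusField G w y i = 0 :=
  G.sum_sum_neighborFinset_eq_zero_of_antisymm _ fun i j => by rw [hw]; ring

theorem two_mul_sum_mul_consensusField {y : V → ℝ} (hw : ∀ i j, w i j y = w j i y) (c : ℝ) :
    2 * ∑ i, (y i - c) * consensusField G w y i =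
      -∑ i, ∑ j ∈ G.neighborFinset i, w i j y * (y i - y j) ^ 2 := by
  rw [eq_neg_iff_add_eq_zero]
  simp only [consensusField, mul_sum, ← sum_add_distrib]
  exact G.sum_sum_neighborFinset_eq_zero_of_antisymm _ fun i j => by rw [hw j i]; ring

theorem two_mul_sum_mul_consensusField_le (hG : G.Connected) {y : V → ℝ}
    (hw : ∀ i j, w i j y = w j i y) {wlow : ℝ} (hwlow : 0 ≤ wlow)
    (hbound : ∀ i j, G.Adj i j → wlow ≤ w i j y) {c : ℝ} (hc : ∑ i, (y i - c) = 0) :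
    2 * ∑ i, (y i - c) * consensusField G w y i ≤
      -(wlow / Fintype.card V ^ 3) * ∑ i, (y i - c) ^ 2 := by
  have := hG.nonempty
  have hcard : (0 : ℝ) < Fintype.card V ^ 3 := by have := Fintype.card_pos (α := V); positivity
  have hpoincare := hG.sum_sq_le_of_sum_eq_zero hc
  simp only [sub_sub_sub_cancel_right] at hpoincare
  have hweights : wlow * ∑ i, ∑ j ∈ G.neighborFinset i, (y i - y j) ^ 2 ≤
      ∑ i, ∑ j ∈ G.neighborFinset i, w i j y * (y i - y j) ^ 2 := by
    simp only [mul_sum]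
    exact sum_le_sum fun i _ => sum_le_sum fun j hj =>
      mul_le_mul_of_nonneg_right (hbound i j ((G.mem_neighborFinset i j).mp hj)) (sq_nonneg _)
  rw [two_mul_sum_mul_consensusField hw, neg_mul, neg_le_neg_iff, div_mul_eq_mul_div,
    div_le_iff₀ hcard]
  nlinarith [mul_le_mul_of_nonneg_left hpoincare hwlow]

variable {x : ℝ → V → ℝ}

theorem IsConsensusSolution.sum_eq (hx : IsConsensusSolution G w x)
    (hw : ∀ t, 0 ≤ t → ∀ i j, w i j (x t) = w j i (x t)) {t : ℝ} (ht : 0 ≤ t) :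
    ∑ i, x t i = ∑ i, x 0 i := by
  have hderiv (s : ℝ) (hs : 0 ≤ s) : HasDerivWithinAt (fun s => ∑ i, x s i) 0 (Ici 0) s := by
    simpa [sum_consensusField_eq_zero (hw s hs)] using
      HasDerivWithinAt.fun_sum fun i (_ : i ∈ Finset.univ) => hx s hs i
  exact constant_of_has_deriv_right_zero
    (fun s hs => (hderiv s hs.1).continuousWithinAt.mono Icc_subset_Ici_self)
    (fun s hs => (hderiv s hs.1).mono (Ici_subset_Ici.mpr hs.1)) t ⟨ht, le_rfl⟩

theorem IsConsensusSolution.sum_sq_sub_average_le (hx : IsConsensusSolution G w x)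
    (hG : G.Connected) (hw : ∀ t, 0 ≤ t → ∀ i j, w i j (x t) = w j i (x t)) {wlow : ℝ}
    (hwlow : 0 ≤ wlow) (hbound : ∀ t, 0 ≤ t → ∀ i j, G.Adj i j → wlow ≤ w i j (x t))
    {t : ℝ} (ht : 0 ≤ t) :
    ∑ i, (x t i - (∑ k, x 0 k) / Fintype.card V) ^ 2 ≤
      (∑ i, (x 0 i - (∑ k, x 0 k) / Fintype.card V) ^ 2) *
        exp (-(wlow / Fintype.card V ^ 3) * t) := by
  set c := (∑ k, x 0 k) / Fintype.card V with hc_def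
  have := hG.nonempty
  have hc (s : ℝ) (hs : 0 ≤ s) : ∑ i, (x s i - c) = 0 := by
    have : (Fintype.card V : ℝ) ≠ 0 := by exact_mod_cast Fintype.card_ne_zero
    rw [sum_sub_distrib, hx.sum_eq hw hs, sum_const, card_univ, nsmul_eq_mul, hc_def,
      mul_div_cancel₀ _ this, sub_self]
  have hderiv (s : ℝ) (hs : 0 ≤ s) : HasDerivWithinAt (fun s => ∑ i, (x s i - c) ^ 2)
      (2 * ∑ i, (x s i - c) * consensusField G w (x s) i) (Ici 0) s := by
    refine (HasDerivWithinAt.fun_sum fun i (_ : i ∈ Finset.univ) =>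
      ((hx s hs i).sub_const c).pow 2).congr_deriv ?_
    rw [mul_sum]
    exact sum_congr rfl fun i _ => by ring
  simpa using le_mul_exp_of_hasDerivWithinAt_le hderiv
    (fun s hs => two_mul_sum_mul_consensusField_le hG (hw s hs) hwlow (hbound s hs) (hc s hs)) ht

theorem IsConsensusSolution.abs_sub_average_le (hx : IsConsensusSolution G w x)
    (hG : G.Connected) (hw : ∀ t, 0 ≤ t → ∀ i j, w i j (x t) = w j i (x t)) {wlow : ℝ}
    (hwlow : 0 ≤ wlow) (hbound : ∀ t, 0 ≤ t → ∀ i j, G.Adj i j → wlow ≤ w i j (x t))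
    {t : ℝ} (ht : 0 ≤ t) (i : V) :
    |x t i - (∑ k, x 0 k) / Fintype.card V| ≤
      √(∑ i, (x 0 i - (∑ k, x 0 k) / Fintype.card V) ^ 2) *
        exp (-(wlow / (2 * Fintype.card V ^ 3)) * t) := by
  set c := (∑ k, x 0 k) / Fintype.card V
  calc |x t i - c| ≤ √(∑ i, (x t i - c) ^ 2) :=
        abs_le_sqrt (single_le_sum (f := fun i => (x t i - c) ^ 2) (fun _ _ => sq_nonneg _)
          (mem_univ i))
    _ ≤ √((∑ i, (x 0 i - c) ^ 2) * exp (-(wlow / Fintype.card V ^ 3) * t)) :=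
        sqrt_le_sqrt (hx.sum_sq_sub_average_le hG hw hwlow hbound ht)
    _ = √(∑ i, (x 0 i - c) ^ 2) * exp (-(wlow / (2 * Fintype.card V ^ 3)) * t) := by
        rw [sqrt_mul' _ (exp_pos _).le, ← exp_half]
        congr 2
        ring

end Consensus

theorem consensus_convergence_general {n : ℕ}
    (G : SimpleGraph (Fin n)) [DecidableRel G.Adj]
    (hconn : G.Connected)
    (w : Fin n → Fin n → (Fin n → ℝ) → ℝ)
    (hwSymm : ∀ i j y, w i j y = w j i y)
    (wlow : ℝ) (hwlow : 0 < wlow)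
    (x : ℝ → Fin n → ℝ)
    (hbound : ∀ t : ℝ, 0 ≤ t → ∀ i j, G.Adj i j → wlow ≤ w i j (x t))
    (hdyn : ∀ t : ℝ, 0 ≤ t → ∀ i, HasDerivWithinAt (fun s => x s i)
      (∑ j ∈ G.neighborFinset i, w i j (x t) * (x t j - x t i)) (Set.Ici 0) t) :
    (∀ i, Tendsto (fun t => x t i) atTop (nhds ((∑ k, x 0 k) / n))) ∧
      ∃ C ≥ (0 : ℝ), ∃ β > (0 : ℝ), ∀ t : ℝ, 0 ≤ t → ∀ i,
        |x t i - (∑ k, x 0 k) / n| ≤ C * Real.exp (-β * t) := by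
  have hx : IsConsensusSolution G w x := hdyn
  have hn : 0 < n := Fin.pos_iff_nonempty.mpr hconn.nonempty
  have hβ : 0 < wlow / (2 * n ^ 3) := by positivity
  have hdecay := fun t ht i =>
    hx.abs_sub_average_le hconn (fun _ _ i j => hwSymm i j _) hwlow.le hbound (t := t) ht i
  simp only [Fintype.card_fin] at hdecay
  exact ⟨fun i => tendsto_of_abs_sub_le_mul_exp hβ fun t ht => hdecay t ht i,
    _, sqrt_nonneg _, _, hβ, hdecay⟩

/-- Under connectedness of the graph and weights uniformly bounded below by a positive constant
along the trajectory, every solution of the nonlinear consensus dynamics converges, exponentially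
fast, to the consensus value `x̄ = (1/n)∑ᵢ xᵢ(0)`. -/
theorem consensus_convergence {n : ℕ} (hn : 0 < n)
    (G : SimpleGraph (Fin n)) [DecidableRel G.Adj]
    (hconn : G.Connected)
    (w : Fin n → Fin n → (Fin n → ℝ) → ℝ)
    (hwSymm : ∀ i j y, w i j y = w j i y)
    (wlow : ℝ) (hwlow : 0 < wlow)
    (x : ℝ → Fin n → ℝ)
    (hbound : ∀ t : ℝ, 0 ≤ t → ∀ i j, G.Adj i j → wlow ≤ w i j (x t))
    (hdyn : ∀ t : ℝ, 0 ≤ t → ∀ i, HasDerivWithinAt (fun s => x s i)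
      (∑ j ∈ G.neighborFinset i, w i j (x t) * (x t j - x t i)) (Set.Ici 0) t) :
    (∀ i, Tendsto (fun t => x t i) atTop (nhds ((∑ k, x 0 k) / n))) ∧
      ∃ C ≥ (0 : ℝ), ∃ β > (0 : ℝ), ∀ t : ℝ, 0 ≤ t → ∀ i,
        |x t i - (∑ k, x 0 k) / n| ≤ C * Real.exp (-β * t) :=
  consensus_convergence_general G hconn w hwSymm wlow hwlow x hbound hdyn
end

section
/- For the two-agent consensus system ṗ = w(p−q)(q−p), q̇ = w(p−q)(p−q) restricted to the line p + q = 0 with weight w(z) = (1+z²)^{−α}, the function φ₂(p) = 2p·exp(∑_{n≥1} [α(α−1)⋯(α−n+1)·2^{2n−1}·p^{2n}]/(n·n!)), defined for |2p| < 1, satisfies the eigenfunction ODE: (2z/(1+z²)^α)·φ₂'(z) = 2φ₂(z) with z = 2p, i.e., it is a Koopman eigenfunction with eigenvalue −2 of the restricted dynamics. -/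
/-!
On `|z| < 1` write `φ z = z * exp (G (z ^ 2) / 2)`, where
`G w = ∑ choose(α, n + 1) w ^ (n + 1) / (n + 1)`. Differentiating term by term and using the real
binomial series, `w G'(w) = (1 + w) ^ α - 1`. Hence
`φ' z = exp (G (z ^ 2) / 2) * (1 + z ^ 2 G'(z ^ 2)) = exp (G (z ^ 2) / 2) * (1 + z ^ 2) ^ α`,
and multiplying by `2 z / (1 + z ^ 2) ^ α` gives `2 φ z`.
-/

open Finset

theorem Ring.choose_eq_prod_range_div {K : Type*} [Field K] [CharZero K] (a : K) (n : ℕ) :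
    Ring.choose a n = (∏ j ∈ range n, (a - j)) / n.factorial := by
  rw [Ring.choose_eq_smul, ← Polynomial.aeval_eq_smeval, Polynomial.aeval_def,
    ← Polynomial.eval_map, descPochhammer_map, descPochhammer_eval_eq_prod_range,
    smul_eq_mul, inv_mul_eq_div]

theorem hasDerivAt_tsum_mul_pow_succ_div {a : ℕ → ℝ} {r w : ℝ}
    (ha : Summable (fun n => |a n| * r ^ n)) (hw : |w| < r) :
    HasDerivAt (fun x => ∑' n, a n * x ^ (n + 1) / (n + 1)) (∑' n, a n * w ^ n) w := by
  have hball : ∀ y, y ∈ Metric.ball (0 : ℝ) r ↔ |y| < r := fun y => mem_ball_zero_iff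
  have hderiv (n : ℕ) (y : ℝ) :
      HasDerivAt (fun x => a n * x ^ (n + 1) / (n + 1)) (a n * y ^ n) y := by
    refine (((hasDerivAt_pow (n + 1) y).const_mul (a n)).div_const ((n : ℝ) + 1)).congr_deriv ?_
    push_cast
    field_simp
  have hbound (n : ℕ) (y : ℝ) (hy : y ∈ Metric.ball 0 r) : ‖a n * y ^ n‖ ≤ |a n| * r ^ n := by
    rw [norm_mul, norm_pow, Real.norm_eq_abs, Real.norm_eq_abs]
    gcongr
    exact ((hball y).mp hy).le
  exact hasDerivAt_tsum_of_isPreconnected ha Metric.isOpen_ball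
    (convex_ball 0 r).isPreconnected (fun n y _ => hderiv n y) hbound
    ((hball 0).mpr (by simpa using (abs_nonneg w).trans_lt hw)) (by simp) ((hball w).mpr hw)

namespace Real

theorem hasSum_choose_mul_pow (a : ℝ) {x : ℝ} (hx : |x| < 1) :
    HasSum (fun n => Ring.choose a n * x ^ n) ((1 + x) ^ a) := by
  have := one_add_rpow_hasFPowerSeriesOnBall_zero (a := a) |>.hasSum (y := x)
    (by simpa [← ofReal_norm] using hx)
  simpa [FormalMultilinearSeries.ofScalars_apply_eq, binomialSeries, mul_comm] using this

theorem mul_tsum_choose_succ_mul_pow (a : ℝ) {x : ℝ} (hx : |x| < 1) :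
    x * ∑' n, Ring.choose a (n + 1) * x ^ n = (1 + x) ^ a - 1 := by
  have htail := (hasSum_nat_add_iff' 1).mpr (hasSum_choose_mul_pow a hx)
  simp only [range_one, sum_singleton, Ring.choose_zero_right, pow_zero, mul_one] at htail
  rw [← tsum_mul_left, ← htail.tsum_eq]
  exact tsum_congr fun n => by ring

theorem summable_abs_choose_mul_pow (a : ℝ) {r : ℝ} (hr0 : 0 ≤ r) (hr : r < 1) :
    Summable (fun n => |Ring.choose a n| * r ^ n) := by
  lift r to NNReal using hr0
  have h := (binomialSeries ℝ a).summable_norm_mul_pow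
    ((ENNReal.coe_lt_one_iff.mpr hr).trans_le binomialSeries_radius_ge_one)
  simpa [binomialSeries, FormalMultilinearSeries.ofScalars_norm] using h

theorem hasDerivAt_tsum_choose_succ_mul_pow_succ_div (a : ℝ) {w : ℝ} (hw : |w| < 1) :
    HasDerivAt (fun x => ∑' n, Ring.choose a (n + 1) * x ^ (n + 1) / (n + 1))
      (∑' n, Ring.choose a (n + 1) * w ^ n) w := by
  obtain ⟨r, hwr, hr1⟩ := exists_between hw
  have hr0 : 0 < r := (abs_nonneg w).trans_lt hwr
  have hshift := (summable_nat_add_iff 1).mpr (summable_abs_choose_mul_pow a hr0.le hr1)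
  refine hasDerivAt_tsum_mul_pow_succ_div ((hshift.mul_left r⁻¹).congr fun n => ?_) hwr
  rw [pow_succ]
  field_simp

end Real

theorem two_agent_eigenfunction_ode_general (α : ℝ)
    (φ : ℝ → ℝ)
    (hφ : ∀ z : ℝ, φ z = z * Real.exp (∑' k : ℕ,
      (∏ j ∈ range (k + 1), (α - j)) * z ^ (2 * (k + 1)) /
        (2 * (k + 1) * (Nat.factorial (k + 1))))) :
    ∀ z : ℝ, |z| < 1 →
      (2 * z / (1 + z ^ 2) ^ α) * deriv φ z = 2 * φ z := by
  intro z hz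
  set G : ℝ → ℝ := fun w => ∑' n, Ring.choose α (n + 1) * w ^ (n + 1) / (n + 1) with hG_def
  have hφG : φ = fun x => x * Real.exp (G (x ^ 2) / 2) := by
    funext x
    rw [hφ, hG_def, ← tsum_div_const]
    refine congrArg (fun s => x * Real.exp s) (tsum_congr fun k => ?_)
    rw [Ring.choose_eq_prod_range_div, ← pow_mul]
    field_simp
  have hz2 : |z ^ 2| < 1 := by
    rw [abs_pow, sq_lt_one_iff_abs_lt_one, abs_abs]
    exact hz
  have hG := Real.hasDerivAt_tsum_choose_succ_mul_pow_succ_div α hz2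
  have hderiv : HasDerivAt φ (Real.exp (G (z ^ 2) / 2) * (1 + z ^ 2) ^ α) z := by
    rw [hφG]
    refine ((hasDerivAt_id z).mul
      (((hG.comp (h := fun x => x ^ 2) z (hasDerivAt_pow 2 z)).div_const 2).exp)).congr_deriv ?_
    norm_num
    linear_combination Real.exp (G (z ^ 2) / 2) * Real.mul_tsum_choose_succ_mul_pow α hz2
  rw [hderiv.deriv, hφG]
  have hpos : 0 < (1 + z ^ 2) ^ α := by positivity
  field_simp

/-- For the two-agent consensus system with weight `w(z) = (1+z²)^{−α}`, restricted to the line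
`p + q = 0` (so the disagreement `z = 2p` evolves by `ż = −2z/(1+z²)^α`), the function
`φ(z) = z·exp(∑_{n≥1} α(α−1)⋯(α−n+1)·z^{2n}/(2n·n!))` (equivalently, in the variable `p`,
`φ₂(p) = 2p·exp(∑_{n≥1} α(α−1)⋯(α−n+1)·2^{2n−1}·p^{2n}/(n·n!))`) satisfies the Koopman
eigenfunction ODE `(2z/(1+z²)^α)·φ'(z) = 2·φ(z)` for `|z| < 1`, i.e. it is a Koopman
eigenfunction with eigenvalue `−2` of the restricted dynamics. -/
theorem two_agent_eigenfunction_ode (α : ℝ) (hα : 0 ≤ α)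
    (φ : ℝ → ℝ)
    (hφ : ∀ z : ℝ, φ z = z * Real.exp (∑' k : ℕ,
      (∏ j ∈ range (k + 1), (α - j)) * z ^ (2 * (k + 1)) /
        (2 * (k + 1) * (Nat.factorial (k + 1))))) :
    ∀ z : ℝ, |z| < 1 →
      (2 * z / (1 + z ^ 2) ^ α) * deriv φ z = 2 * φ z :=
  two_agent_eigenfunction_ode_general α φ hφ
end
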